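/- arXiv:2108.03420 — 5 statements merged into one kernel-verified Lean document; each statement's English description precedes it below -/
import Mathlib

section
/- Let $E_0 > 0$, $v > 0$, $W_0 \in \mathbb{C}$ with $W_0 \neq 0$, and let $c, C_1, C_2, \rho > 0$. Then there exists $\varepsilon > 0$, depending only on $c$, $C_1$, $C_2$, with the following property: for every $h \in (0,1)$ with $\varepsilon h \le \rho$, every $E_1 \in \mathbb{C}$, and every function $S$ holomorphic on the ball $B(E_1,\rho)$ satisfying $c \le |S'(E)| \le C_1$ and $|S''(E)| \le C_2$ on $B(E_1,\rho)$, if $C_0(E_1;h) = 1$ then $E_1$ is the unique solution of the equation $C_0(E;h) = 1$ in the ball $\{E : |E - E_1| \le \varepsilon h\}$. -/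
/-!
If `C₀(E) = C₀(E₁) = 1`, then `exp (i S(E)/h) = exp (i S(E₁)/h)`, so `S(E) - S(E₁) ∈ 2πhℤ`.
For `|E - E₁| ≤ εh` with `ε ≤ 1/C₁`, the bound `|S'| ≤ C₁` gives `|S(E) - S(E₁)| ≤ h < 2πh`,
hence `S(E) = S(E₁)`. Finally `|S''| ≤ C₂` keeps `S'` within `C₂εh < c ≤ |S'(E₁)|` of `S'(E₁)`
on the ball, which makes `S` injective there.
-/

open Complex Metric Real

theorem eq_of_mul_div_eq_one {K : Type*} [Field K] {k d x y : K}
    (hx : k * x / d = 1) (hy : k * y / d = 1) : x = y := by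
  have hd : d ≠ 0 := by rintro rfl; simp at hx
  rw [div_eq_one_iff_eq hd] at hx hy
  have hk : k ≠ 0 := by rintro rfl; exact hd (by simpa using hx.symm)
  exact mul_left_cancel₀ hk (hx.trans hy.symm)

theorem eq_of_exp_I_mul_div_eq {z w : ℂ} {h : ℝ} (hh : 0 < h)
    (hexp : exp (I * z / h) = exp (I * w / h)) (hzw : ‖z - w‖ < 2 * π * h) : z = w := by
  obtain ⟨n, hn⟩ := exp_eq_exp_iff_exists_int.mp hexp
  have hh' : (h : ℂ) ≠ 0 := ofReal_ne_zero.mpr hh.ne'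
  have hsub : z - w = ((n * (2 * π * h) : ℝ) : ℂ) := by
    push_cast
    field_simp at hn
    linear_combination hn
  have hn0 : n = 0 := by
    by_contra hn0
    have hn1 : (1 : ℝ) ≤ |(n : ℝ)| := by exact_mod_cast Int.one_le_abs hn0
    rw [hsub, norm_real, Real.norm_eq_abs, abs_mul,
      abs_of_pos (by positivity : 0 < 2 * π * h)] at hzw
    linarith [mul_le_mul_of_nonneg_right hn1 (by positivity : (0 : ℝ) ≤ 2 * π * h)]
  rw [← sub_eq_zero, hsub, hn0]
  simp

theorem Convex.eq_of_apply_eq_of_norm_deriv_sub_lt {𝕜 G : Type*} [RCLike 𝕜]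
    [NormedAddCommGroup G] [NormedSpace 𝕜 G] {f : 𝕜 → G} {s : Set 𝕜} {a x : 𝕜} {K : ℝ}
    (hs : Convex ℝ s) (hf : ∀ y ∈ s, DifferentiableAt 𝕜 f y)
    (hK : ∀ y ∈ s, ‖deriv f y - deriv f a‖ ≤ K) (hlt : K < ‖deriv f a‖)
    (ha : a ∈ s) (hx : x ∈ s) (hfx : f x = f a) : x = a := by
  set g : 𝕜 → G := fun z => f z - z • deriv f a
  have hg : ∀ y ∈ s, HasDerivAt g (deriv f y - deriv f a) y := fun y hy =>
    (hf y hy).hasDerivAt.sub (by simpa using (hasDerivAt_id y).smul_const (deriv f a))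
  have hmv : ‖g x - g a‖ ≤ K * ‖x - a‖ :=
    hs.norm_image_sub_le_of_norm_deriv_le (fun y hy => (hg y hy).differentiableAt)
      (fun y hy => (hg y hy).deriv ▸ hK y hy) ha hx
  have hga : g x - g a = -((x - a) • deriv f a) := by
    simp only [g, hfx, sub_smul]
    abel
  rw [hga, norm_neg, norm_smul, mul_comm] at hmv
  have : ‖x - a‖ = 0 := by nlinarith [norm_nonneg (x - a)]
  simpa [sub_eq_zero] using this

theorem Convex.norm_deriv_sub_le_of_norm_deriv_deriv_le {f : ℂ → ℂ} {U s : Set ℂ} {C : ℝ}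
    (hs : Convex ℝ s) (hf : DifferentiableOn ℂ f U) (hU : IsOpen U) (hsU : s ⊆ U)
    (hC : ∀ y ∈ s, ‖deriv (deriv f) y‖ ≤ C) {x y : ℂ} (hx : x ∈ s) (hy : y ∈ s) :
    ‖deriv f y - deriv f x‖ ≤ C * ‖y - x‖ :=
  hs.norm_image_sub_le_of_norm_deriv_le
    (fun z hz => ((hf.analyticOnNhd hU).deriv z (hsU hz)).differentiableAt) hC hx hy

theorem stmt_4_general (E0 v : ℝ)
    (W0 : ℂ) (c C1 C2 ρ : ℝ)
    (hc : 0 < c) (hC1 : 0 < C1) (hC2 : 0 < C2) (hρ : 0 < ρ) :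
    ∃ ε > 0, ∀ h ∈ Set.Ioo (0:ℝ) 1, ε * h ≤ ρ → ∀ E1 : ℂ, ∀ S : ℂ → ℂ,
      DifferentiableOn ℂ S (Metric.ball E1 ρ) →
      (∀ E ∈ Metric.ball E1 ρ, c ≤ ‖deriv S E‖ ∧ ‖deriv S E‖ ≤ C1) →
      (∀ E ∈ Metric.ball E1 ρ, ‖deriv (deriv S) E‖ ≤ C2) →
      Complex.I * h * Real.pi * W0 * Complex.exp (Complex.I * S E1 / h) / (v * Real.sqrt E0)
        = 1 →
      ∀ E : ℂ, ‖E - E1‖ ≤ ε * h →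
        (Complex.I * h * Real.pi * W0 * Complex.exp (Complex.I * S E / h) /
            (v * Real.sqrt E0) = 1 ↔ E = E1) := by
  -- `ε ≤ ρ` and `h < 1` keep the closed ball of radius `εh` strictly inside `B(E₁, ρ)`.
  set ε := min ρ (min (1 / C1) (c / (2 * C2)))
  have hε : 0 < ε := by positivity
  have hερ : ε ≤ ρ := min_le_left _ _
  have hεC1 : C1 * ε ≤ 1 := by
    rw [← le_div_iff₀' hC1]; exact (min_le_right _ _).trans (min_le_left _ _)
  have hεC2 : C2 * ε ≤ c / 2 := by
    rw [← le_div_iff₀' hC2, div_div]; exact (min_le_right _ _).trans (min_le_right _ _)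
  refine ⟨ε, hε, fun h ⟨hh0, hh1⟩ _ E1 S hS hS' hS'' hE1 E hE => ⟨fun hEres => ?_, ?_⟩⟩
  · set B := closedBall E1 (ε * h)
    have hBsub : B ⊆ ball E1 ρ := closedBall_subset_ball (by nlinarith)
    have hE1B : E1 ∈ B := mem_closedBall_self (by positivity)
    have hEB : E ∈ B := mem_closedBall_iff_norm.mpr hE
    have hdiff : ∀ y ∈ B, DifferentiableAt ℂ S y :=
      fun y hy => hS.differentiableAt (isOpen_ball.mem_nhds (hBsub hy))
    have hSE : S E = S E1 := by
      refine eq_of_exp_I_mul_div_eq hh0 (eq_of_mul_div_eq_one hEres hE1) ?_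
      calc ‖S E - S E1‖ ≤ C1 * ‖E - E1‖ :=
            (convex_closedBall _ _).norm_image_sub_le_of_norm_deriv_le hdiff
              (fun y hy => (hS' y (hBsub hy)).2) hE1B hEB
        _ ≤ C1 * ε * h := by rw [mul_assoc]; gcongr
        _ < 2 * π * h := by nlinarith [pi_gt_three]
    refine (convex_closedBall _ _).eq_of_apply_eq_of_norm_deriv_sub_lt (K := C2 * (ε * h)) hdiff
      (fun y hy => ?_) ?_ hE1B hEB hSE
    · calc ‖deriv S y - deriv S E1‖ ≤ C2 * ‖y - E1‖ :=
            (convex_closedBall _ _).norm_deriv_sub_le_of_norm_deriv_deriv_le hS isOpen_ball hBsub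
              (fun z hz => hS'' z (hBsub hz)) hE1B hy
        _ ≤ C2 * (ε * h) := by gcongr; exact mem_closedBall_iff_norm.mp hy
    · calc C2 * (ε * h) < c := by nlinarith
        _ ≤ ‖deriv S E1‖ := (hS' E1 (mem_ball_self hρ)).1
  · rintro rfl
    exact hE1

/-- Local uniqueness (separation) of pseudo-resonances at scale `εh`: there exists `ε > 0`
(depending only on `c, C₁, C₂`) such that if `S` is holomorphic on `B(E₁,ρ)` with
`c ≤ |S'| ≤ C₁` and `|S''| ≤ C₂` there and `C₀(E₁;h) = 1`, then `E₁` is the unique solution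
of `C₀(E;h) = 1` in the closed ball `|E - E₁| ≤ εh`. -/
theorem stmt_4 (E0 v : ℝ) (hE0 : 0 < E0) (hv : 0 < v)
    (W0 : ℂ) (hW0 : W0 ≠ 0) (c C1 C2 ρ : ℝ)
    (hc : 0 < c) (hC1 : 0 < C1) (hC2 : 0 < C2) (hρ : 0 < ρ) :
    ∃ ε > 0, ∀ h ∈ Set.Ioo (0:ℝ) 1, ε * h ≤ ρ → ∀ E1 : ℂ, ∀ S : ℂ → ℂ,
      DifferentiableOn ℂ S (Metric.ball E1 ρ) →
      (∀ E ∈ Metric.ball E1 ρ, c ≤ ‖deriv S E‖ ∧ ‖deriv S E‖ ≤ C1) →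
      (∀ E ∈ Metric.ball E1 ρ, ‖deriv (deriv S) E‖ ≤ C2) →
      Complex.I * h * Real.pi * W0 * Complex.exp (Complex.I * S E1 / h) / (v * Real.sqrt E0)
        = 1 →
      ∀ E : ℂ, ‖E - E1‖ ≤ ε * h →
        (Complex.I * h * Real.pi * W0 * Complex.exp (Complex.I * S E / h) /
            (v * Real.sqrt E0) = 1 ↔ E = E1) :=
  stmt_4_general E0 v W0 c C1 C2 ρ hc hC1 hC2 hρ
end

section
/- Let $E_0 > 0$, $v > 0$, $W_0 \in \mathbb{C}$ with $W_0 \neq 0$, let $U \subseteq \mathbb{C}$ be an open neighborhood of $E_0$, and let $S$ be holomorphic on $U$, real-valued on $U \cap \mathbb{R}$, with $S'(E_0) = T > 0$. Then for every $M > T^{-1}$ and every $r > 0$ there exists $h_0 > 0$ such that for all $h \in (0,h_0)$ there exists $E \in \mathbb{C}$ with $|\operatorname{Re} E - E_0| \le r h \log(1/h)$, $-M h \log(1/h) \le \operatorname{Im} E \le 0$, and $C_0(E;h) = 1$. In other words, the rectangle $R_h(M)$ contains a pseudo-resonance for all sufficiently small $h$. -/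
/-!
Writing `a = v √E₀ / (i π W₀)`, the equation `C₀(E;h) = 1` reads `exp (i S(E)/h) = a/h`. Its
solutions in the `S`-plane are `w = -i h log(a/h) + 2πhk`, with `Im w = -h log(1/h) + O(h)`,
and the integer `k` can be chosen so that `|Re w - S(E₀)| ≤ πh`. Thus
`w - S(E₀) = -i h log(1/h) + o(h log(1/h))`, and the local inverse of `S` at `E₀` (which exists
since `S'(E₀) = T ≠ 0`) yields `E` with `S(E) = w` and `E - E₀ = -i h log(1/h)/T + o(h log(1/h))`.
As `T⁻¹ < M`, such `E` lies in `R_h(M)` for small `h`.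
-/

open Filter Asymptotics Complex
open scoped Topology

theorem HasStrictDerivAt.exists_eventually_rightInverse_isLittleO {𝕜 α : Type*}
    [NontriviallyNormedField 𝕜] [CompleteSpace 𝕜] {f : 𝕜 → 𝕜} {f' a : 𝕜}
    (hf : HasStrictDerivAt f f' a) (hf' : f' ≠ 0) {l : Filter α} {w : α → 𝕜}
    (hw : Tendsto w l (𝓝 (f a))) :
    ∃ E : α → 𝕜, (∀ᶠ x in l, f (E x) = w x) ∧
      (fun x => E x - a - f'⁻¹ * (w x - f a)) =o[l] fun x => w x - f a := by
  refine ⟨hf.localInverse f f' a hf' ∘ w, hw.eventually (hf.eventually_right_inverse hf'), ?_⟩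
  have hg := hasDerivAt_iff_isLittleO.mp (hf.to_localInverse hf').hasDerivAt
  have hga : hf.localInverse f f' a hf' (f a) = a :=
    (hf.hasStrictFDerivAt_equiv hf').localInverse_apply_image
  rw [hga] at hg
  simpa only [Function.comp_def, smul_eq_mul, mul_comm] using hg.comp_tendsto hw

theorem Complex.exists_exp_I_mul_eq_and_abs_re_sub_le {c : ℂ} (hc : c ≠ 0) (t : ℝ) :
    ∃ z : ℂ, exp (I * z) = c ∧ z.im = -Real.log ‖c‖ ∧ |z.re - t| ≤ Real.pi := by
  set k : ℤ := round ((t - arg c) / (2 * Real.pi))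
  refine ⟨-I * log c + 2 * Real.pi * k, ?_, ?_, ?_⟩
  · have : I * (-I * log c + 2 * Real.pi * k) = log c + k * (2 * Real.pi * I) := by
      linear_combination (-log c) * I_mul_I
    rw [this, exp_add, exp_log hc, exp_int_mul_two_pi_mul_I, mul_one]
  · simp [log_re]
  · have hre : (-I * log c + 2 * Real.pi * k).re = arg c + 2 * Real.pi * k := by simp [log_im]
    have hk := abs_sub_round ((t - arg c) / (2 * Real.pi))
    rw [hre, show arg c + 2 * Real.pi * k - t
        = -(2 * Real.pi) * ((t - arg c) / (2 * Real.pi) - k) by field_simp; ring,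
      abs_mul, abs_neg, abs_of_pos Real.two_pi_pos]
    nlinarith [Real.pi_pos]

theorem Complex.exists_exp_I_mul_div_eq_and_abs_re_sub_le {c : ℂ} (hc : c ≠ 0) {h : ℝ}
    (hh : 0 < h) (s : ℝ) :
    ∃ w : ℂ, exp (I * w / h) = c ∧ w.im = -(h * Real.log ‖c‖) ∧ |w.re - s| ≤ Real.pi * h := by
  obtain ⟨z, hexp, him, hre⟩ := exists_exp_I_mul_eq_and_abs_re_sub_le hc (s / h)
  refine ⟨h * z, ?_, by simp [him], ?_⟩
  · rwa [mul_left_comm, mul_div_cancel_left₀ _ (ofReal_ne_zero.mpr hh.ne')]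
  · have : (h * z).re - s = h * (z.re - s / h) := by
      simp only [mul_re, ofReal_re, ofReal_im, zero_mul, sub_zero]
      field_simp
    rw [this, abs_mul, abs_of_pos hh, mul_comm]
    exact mul_le_mul_of_nonneg_right hre hh.le

theorem isLittleO_id_mul_log_one_div :
    (fun h : ℝ => h) =o[𝓝[>] 0] fun h => h * Real.log (1 / h) := by
  have hlog : Tendsto (fun h : ℝ => Real.log (1 / h)) (𝓝[>] 0) atTop := by
    simpa only [one_div, Function.comp_def] using
      Real.tendsto_log_atTop.comp tendsto_inv_nhdsGT_zero
  have hone : (fun _ : ℝ => (1 : ℝ)) =o[𝓝[>] 0] fun h => Real.log (1 / h) :=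
    (isLittleO_one_left_iff ℝ).mpr (tendsto_norm_atTop_atTop.comp hlog)
  simpa only [mul_one] using (isBigO_refl (fun h : ℝ => h) _).mul_isLittleO hone

theorem tendsto_mul_log_one_div_nhdsGT_zero :
    Tendsto (fun h : ℝ => h * Real.log (1 / h)) (𝓝[>] 0) (𝓝 0) := by
  have := ((Real.continuous_mul_log.tendsto 0).mono_left
    (nhdsWithin_le_nhds (s := Set.Ioi 0))).neg
  simpa only [one_div, Real.log_inv, mul_neg, zero_mul, neg_zero] using this

theorem Complex.exists_exp_I_mul_div_eq_div_isLittleO {a : ℂ} (ha : a ≠ 0) (s : ℝ) :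
    ∃ w : ℝ → ℂ, (∀ᶠ h in 𝓝[>] 0, exp (I * w h / h) = a / h) ∧
      (fun h => w h - s + I * (h * Real.log (1 / h) : ℝ)) =o[𝓝[>] 0]
        fun h => h * Real.log (1 / h) := by
  have hw : ∀ h : ℝ, ∃ w : ℂ, 0 < h → exp (I * w / h) = a / h ∧
      w.im = -(h * Real.log ‖a / h‖) ∧ |w.re - s| ≤ Real.pi * h := fun h =>
    if hh : 0 < h then
      (exists_exp_I_mul_div_eq_and_abs_re_sub_le (div_ne_zero ha (ofReal_ne_zero.mpr hh.ne'))
        hh s).imp fun _ hw _ => hw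
    else ⟨0, fun h' => (hh h').elim⟩
  choose w hw using hw
  refine ⟨w, ?_, IsBigO.trans_isLittleO ?_ isLittleO_id_mul_log_one_div⟩
  · filter_upwards [self_mem_nhdsWithin] with h hh using (hw h hh).1
  refine IsBigO.of_bound (Real.pi + |Real.log ‖a‖|) ?_
  filter_upwards [self_mem_nhdsWithin] with h (hh : 0 < h)
  obtain ⟨-, him, hre⟩ := hw h hh
  have hlog : Real.log ‖a / h‖ = Real.log ‖a‖ + Real.log (1 / h) := by
    rw [norm_div, norm_real, Real.norm_of_nonneg hh.le, div_eq_mul_one_div,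
      Real.log_mul (norm_ne_zero_iff.mpr ha) (by positivity)]
  have him' : (w h - s + I * (h * Real.log (1 / h) : ℝ)).im = -(h * Real.log ‖a‖) := by
    rw [add_im, sub_im, ofReal_im, I_mul_im, ofReal_re, him, hlog]; ring
  calc ‖w h - s + I * (h * Real.log (1 / h) : ℝ)‖
      ≤ |(w h).re - s| + |-(h * Real.log ‖a‖)| := by
        have := norm_le_abs_re_add_abs_im (w h - s + I * (h * Real.log (1 / h) : ℝ))
        rwa [him', add_re, sub_re, ofReal_re, I_mul_re, ofReal_im, neg_zero, add_zero] at this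
    _ ≤ Real.pi * h + h * |Real.log ‖a‖| := by
        rw [abs_neg, abs_mul, abs_of_pos hh]; gcongr
    _ = (Real.pi + |Real.log ‖a‖|) * ‖h‖ := by rw [Real.norm_of_nonneg hh.le]; ring

theorem HasStrictDerivAt.exists_exp_I_mul_comp_div_eq_div_isLittleO {S : ℂ → ℂ} {z₀ T : ℂ}
    (hS : HasStrictDerivAt S T z₀) (hT : T ≠ 0) (hS₀ : (S z₀).im = 0) {a : ℂ} (ha : a ≠ 0) :
    ∃ E : ℝ → ℂ, (∀ᶠ h : ℝ in 𝓝[>] 0, Complex.exp (I * S (E h) / h) = a / (h : ℂ)) ∧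
      (fun h => E h - z₀ + I * (h * Real.log (1 / h) : ℝ) / T) =o[𝓝[>] 0]
        fun h => h * Real.log (1 / h) := by
  obtain ⟨w, hexp, hw⟩ := Complex.exists_exp_I_mul_div_eq_div_isLittleO ha (S z₀).re
  rw [show (((S z₀).re : ℝ) : ℂ) = S z₀ from ext rfl (by simp [hS₀])] at hw
  have hu : (fun h => w h - S z₀) =O[𝓝[>] 0] fun h => h * Real.log (1 / h) := by
    have hφ : (fun h : ℝ => I * (h * Real.log (1 / h) : ℝ)) =O[𝓝[>] 0]
        fun h => h * Real.log (1 / h) := isBigO_of_le _ fun h => by simp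
    simpa using hw.isBigO.sub hφ
  have hwS : Tendsto w (𝓝[>] 0) (𝓝 (S z₀)) :=
    tendsto_sub_nhds_zero_iff.mp (hu.trans_tendsto tendsto_mul_log_one_div_nhdsGT_zero)
  obtain ⟨E, hSE, hE⟩ := hS.exists_eventually_rightInverse_isLittleO hT hwS
  refine ⟨E, ?_, ?_⟩
  · filter_upwards [hexp, hSE] with h hexp hSE
    rwa [hSE]
  · refine ((hE.trans_isBigO hu).add (hw.const_mul_left T⁻¹)).congr_left fun h => ?_
    field_simp
    ring

theorem re_im_bounds_of_norm_sub_add_I_mul_div_le {E : ℂ} {x₀ T φ ε r M : ℝ}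
    (hφ : 0 ≤ φ) (hεr : ε ≤ r) (hεM : ε ≤ M - T⁻¹) (hεT : ε ≤ T⁻¹)
    (hE : ‖E - x₀ + I * φ / T‖ ≤ ε * ‖φ‖) :
    |E.re - x₀| ≤ r * φ ∧ -(M * φ) ≤ E.im ∧ E.im ≤ 0 := by
  rw [Real.norm_of_nonneg hφ] at hE
  have hre : (E - x₀ + I * φ / T).re = E.re - x₀ := by simp
  have him : (E - x₀ + I * φ / T).im = E.im + φ * T⁻¹ := by
    rw [div_eq_mul_inv, ← ofReal_inv]
    simp
  have hre_le := (abs_re_le_norm _).trans hE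
  have him_le := (abs_im_le_norm _).trans hE
  rw [hre] at hre_le
  rw [him, abs_le] at him_le
  refine ⟨hre_le.trans (by gcongr), ?_, ?_⟩ <;> nlinarith [mul_le_mul_of_nonneg_right hεM hφ,
    mul_le_mul_of_nonneg_right hεT hφ]

/-- Existence of pseudo-resonances: if `S` is holomorphic near `E₀`, real on the reals, with
`S'(E₀) = T > 0`, then for every `M > T⁻¹` and `r > 0`, for all `h` small enough the rectangle
`R_h(M) = E₀ + h log(1/h)[-r,r] + i[-M h log(1/h), 0]` contains a solution of `C₀(E;h) = 1`. -/
theorem stmt_5 (E0 v : ℝ) (hE0 : 0 < E0) (hv : 0 < v)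
    (W0 : ℂ) (hW0 : W0 ≠ 0) (U : Set ℂ) (hU : IsOpen U) (hE0U : (E0 : ℂ) ∈ U)
    (S : ℂ → ℂ) (hS : DifferentiableOn ℂ S U)
    (hreal : ∀ x : ℝ, (x : ℂ) ∈ U → (S x).im = 0)
    (T : ℝ) (hT : 0 < T) (hS' : HasDerivAt S (T : ℂ) (E0 : ℂ)) :
    ∀ M, T⁻¹ < M → ∀ r > 0, ∃ h0 > 0, ∀ h : ℝ, h ∈ Set.Ioo 0 h0 →
      ∃ E : ℂ, |E.re - E0| ≤ r * h * Real.log (1 / h) ∧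
        -(M * h * Real.log (1 / h)) ≤ E.im ∧ E.im ≤ 0 ∧
        Complex.I * h * Real.pi * W0 * Complex.exp (Complex.I * S E / h) /
          (v * Real.sqrt E0) = 1 := by
  intro M hM r hr
  have hstrict : HasStrictDerivAt S T E0 := by
    simpa only [hS'.deriv] using (hS.analyticAt (hU.mem_nhds hE0U)).hasStrictDerivAt
  have hv0 : (v : ℂ) ≠ 0 := ofReal_ne_zero.mpr hv.ne'
  have hsqrt : (Real.sqrt E0 : ℂ) ≠ 0 := ofReal_ne_zero.mpr (Real.sqrt_pos.mpr hE0).ne'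
  have hπ : (Real.pi : ℂ) ≠ 0 := ofReal_ne_zero.mpr Real.pi_ne_zero
  obtain ⟨E, hexp, hE⟩ := hstrict.exists_exp_I_mul_comp_div_eq_div_isLittleO
    (ofReal_ne_zero.mpr hT.ne') (hreal E0 hE0U)
    (div_ne_zero (mul_ne_zero hv0 hsqrt) (mul_ne_zero (mul_ne_zero I_ne_zero hπ) hW0))
  set ε := min r (min (M - T⁻¹) T⁻¹)
  have hε : 0 < ε := lt_min hr (lt_min (by linarith) (inv_pos.mpr hT))
  obtain ⟨h0, hh0, hsub⟩ := mem_nhdsGT_iff_exists_Ioo_subset.mp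
    ((hexp.and (hE.def hε)).and (Ioo_mem_nhdsGT one_pos))
  refine ⟨h0, hh0, fun h hh => ?_⟩
  obtain ⟨⟨hexph, hEh⟩, hh1⟩ := hsub hh
  have hφ : 0 ≤ h * Real.log (1 / h) :=
    mul_nonneg hh1.1.le (Real.log_nonneg (one_le_one_div hh1.1 hh1.2.le))
  obtain ⟨hre, him_lower, him_upper⟩ := re_im_bounds_of_norm_sub_add_I_mul_div_le hφ (min_le_left _ _)
    ((min_le_right _ _).trans (min_le_left _ _)) ((min_le_right _ _).trans (min_le_right _ _))
    hEh
  refine ⟨E h, by rwa [mul_assoc], by rwa [mul_assoc], him_upper, ?_⟩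
  rw [hexph]
  field_simp [ofReal_ne_zero.mpr hh1.1.ne']
end

section
/- Let $E_0 > 0$, $v > 0$, $W_0 \in \mathbb{C}$ with $W_0 \neq 0$, let $U \subseteq \mathbb{C}$ be an open neighborhood of $E_0$, and let $S$ be holomorphic on $U$, real-valued on $U \cap \mathbb{R}$, with $S'(E_0) = T > 0$. Then for every $M > 0$ and $r > 0$ there exist $C > 0$ and $h_0 > 0$ such that for all $h \in (0,h_0)$, every $E \in R_h(M)$ with $C_0(E;h) = 1$ satisfies $\left|\operatorname{Im} E + T^{-1} h \log(1/h)\right| \le C h$; that is, every pseudo-resonance in $R_h(M)$ has imaginary part $-T^{-1} h (\log(1/h) + \mathcal{O}(1))$. -/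
/-!
Taking moduli in `C₀(E;h) = 1` gives exactly `Im S(E) = -h log(1/h) - h c` with
`c = log (v √E₀ / (π ‖W₀‖))`. Since `S` is real on the real axis, `Im S(E) = Im (S(E) - S(Re E))`,
and `R_h(M)` lies in a ball of radius `ρ = O(h log(1/h))` around `E₀`, on which the second-order
Taylor bound gives `S(E) - S(Re E) = T · i Im E + O(ρ |Im E|) = T · i Im E + O(h · h log²(1/h))`.
As `h log²(1/h) → 0`, the error is `O(h)`, hence `T Im E = -h log(1/h) + O(h)`.
-/

open Filter Topology Metric Real NNReal

lemma tendsto_mul_log_one_div_pow_nhdsGT_zero (n : ℕ) :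
    Tendsto (fun h : ℝ => h * log (1 / h) ^ n) (𝓝[>] 0) (𝓝 0) := by
  refine ((tendsto_pow_log_div_mul_add_atTop 1 0 n one_ne_zero).comp
    tendsto_inv_nhdsGT_zero).congr fun h => ?_
  simp [div_eq_mul_inv, mul_comm]

section Linearization

variable {𝕜 E F : Type*} [RCLike 𝕜] [NormedAddCommGroup E] [NormedSpace 𝕜 E] [NormedSpace ℝ E]
  [NormedAddCommGroup F] [NormedSpace 𝕜 F]

lemma ContDiffAt.exists_norm_sub_sub_fderiv_le {f : E → F} {x : E} (hf : ContDiffAt 𝕜 2 f x) :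
    ∃ K : ℝ≥0, ∃ δ > 0, ∀ ρ ≤ δ, ∀ y ∈ closedBall x ρ, ∀ z ∈ closedBall x ρ,
      ‖f z - f y - fderiv 𝕜 f x (z - y)‖ ≤ K * ρ * ‖z - y‖ := by
  obtain ⟨K, t, ht, hLip⟩ := (hf.fderiv_right (m := 1) le_rfl).exists_lipschitzOnWith
  obtain ⟨δ, hδ, hδt⟩ := nhds_basis_closedBall.mem_iff.1
    (inter_mem ht ((hf.eventually (by simp)).mono fun _ h => h.differentiableAt two_ne_zero))
  refine ⟨K, δ, hδ, fun ρ hρ y hy z hz => ?_⟩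
  have hball : closedBall x ρ ⊆ t ∩ {w | DifferentiableAt 𝕜 f w} :=
    (closedBall_subset_closedBall hρ).trans hδt
  refine (convex_closedBall x ρ).norm_image_sub_le_of_norm_fderiv_le'
    (fun w hw => (hball hw).2) (fun w hw => ?_) hy hz
  calc ‖fderiv 𝕜 f w - fderiv 𝕜 f x‖ ≤ K * ‖w - x‖ :=
        hLip.norm_sub_le (hball hw).1 (hball (mem_closedBall_self (dist_nonneg.trans hw))).1
    _ ≤ K * ρ := by gcongr; exact mem_closedBall_iff_norm.1 hw

end Linearization

section

open Complex

lemma mem_closedBall_ofReal_of_abs_re_sub_le {z : ℂ} {x a b : ℝ} (hre : |z.re - x| ≤ a)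
    (him : |z.im| ≤ b) : z ∈ closedBall (x : ℂ) (a + b) := by
  rw [mem_closedBall_iff_norm]
  calc ‖z - x‖ ≤ |(z - x).re| + |(z - x).im| := norm_le_abs_re_add_abs_im _
    _ ≤ a + b := by simpa using add_le_add hre him

lemma im_eq_of_mul_exp_div_eq_one {a h : ℝ} (ha : 0 < a) (hh : 0 < h) {W : ℂ} (hW : W ≠ 0)
    {w : ℂ} (heq : I * h * π * W * exp (I * w / h) / a = 1) :
    w.im = -(h * Real.log (1 / h)) - h * Real.log (a / (π * ‖W‖)) := by
  have hW' : 0 < ‖W‖ := norm_pos_iff.2 hW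
  have hnorm : h * π * ‖W‖ * Real.exp (-w.im / h) = a := by
    have := congrArg norm ((div_eq_one_iff_eq (ofReal_ne_zero.2 ha.ne')).1 heq)
    simpa [Complex.norm_exp, Complex.div_ofReal_re, abs_of_pos hh, abs_of_pos ha,
      abs_of_pos pi_pos] using this
  have hexp : -w.im / h = Real.log (1 / h) + Real.log (a / (π * ‖W‖)) := by
    rw [← Real.log_mul (by positivity) (by positivity), ← hnorm,
      show 1 / h * (h * π * ‖W‖ * Real.exp (-w.im / h) / (π * ‖W‖)) = Real.exp (-w.im / h) by
        field_simp, Real.log_exp]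
  field_simp at hexp
  linarith

lemma abs_im_sub_mul_im_le {f : ℂ → ℂ} {x₀ T K ρ : ℝ}
    (hf : ∀ y ∈ closedBall (x₀ : ℂ) ρ, ∀ z ∈ closedBall (x₀ : ℂ) ρ,
      ‖f z - f y - T * (z - y)‖ ≤ K * ρ * ‖z - y‖)
    (hreal : ∀ x : ℝ, (x : ℂ) ∈ closedBall (x₀ : ℂ) ρ → (f x).im = 0)
    {z : ℂ} (hz : z ∈ closedBall (x₀ : ℂ) ρ) :
    |(f z).im - T * z.im| ≤ K * ρ * |z.im| := by
  have hre : (z.re : ℂ) ∈ closedBall (x₀ : ℂ) ρ := by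
    rw [mem_closedBall_iff_norm] at hz ⊢
    simpa [← ofReal_sub, abs_re_le_norm] using (abs_re_le_norm (z - x₀)).trans hz
  have hzre : z - z.re = z.im * I := by apply Complex.ext <;> simp
  calc |(f z).im - T * z.im| = |(f z - f z.re - T * (z - z.re)).im| := by
        simp [hreal _ hre, hzre]
    _ ≤ K * ρ * |z.im| := by
        simpa [hzre] using (abs_im_le_norm _).trans (hf _ hre z hz)

end

lemma abs_add_inv_mul_le_of_abs_sub_mul_le {T h L c s y B : ℝ} (hT : 0 < T) (hh : 0 < h)
    (hs : s = -(h * L) - h * c) (hsy : |s - T * y| ≤ B * h) :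
    |y + T⁻¹ * h * L| ≤ T⁻¹ * (|c| + B) * h := by
  have hy : y + T⁻¹ * h * L = -T⁻¹ * (s - T * y + h * c) := by
    rw [hs]; field_simp; ring
  rw [hy, abs_mul, abs_neg, abs_of_pos (inv_pos.2 hT), mul_assoc]
  gcongr
  calc |s - T * y + h * c| ≤ |s - T * y| + |h * c| := abs_add_le _ _
    _ ≤ B * h + |c| * h := by rw [abs_mul, abs_of_pos hh, mul_comm h]; gcongr
    _ = (|c| + B) * h := by ring

/-- Width of pseudo-resonances: if `S` is holomorphic near `E₀`, real on the reals, with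
`S'(E₀) = T > 0`, then for every `M > 0` and `r > 0` there exist `C > 0` and `h₀ > 0` such
that for all `h ∈ (0,h₀)`, every solution of `C₀(E;h) = 1` in the rectangle `R_h(M)` has
`|Im E + T⁻¹ h log(1/h)| ≤ C h`. -/
theorem stmt_6 (E0 v : ℝ) (hE0 : 0 < E0) (hv : 0 < v)
    (W0 : ℂ) (hW0 : W0 ≠ 0) (U : Set ℂ) (hU : IsOpen U) (hE0U : (E0 : ℂ) ∈ U)
    (S : ℂ → ℂ) (hS : DifferentiableOn ℂ S U)
    (hreal : ∀ x : ℝ, (x : ℂ) ∈ U → (S x).im = 0)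
    (T : ℝ) (hT : 0 < T) (hS' : HasDerivAt S (T : ℂ) (E0 : ℂ)) :
    ∀ M > 0, ∀ r > 0, ∃ C > 0, ∃ h0 > 0, ∀ h : ℝ, h ∈ Set.Ioo 0 h0 →
      ∀ E : ℂ, |E.re - E0| ≤ r * h * Real.log (1 / h) →
        -(M * h * Real.log (1 / h)) ≤ E.im → E.im ≤ 0 →
        Complex.I * h * Real.pi * W0 * Complex.exp (Complex.I * S E / h) /
          (v * Real.sqrt E0) = 1 →
        |E.im + T⁻¹ * h * Real.log (1 / h)| ≤ C * h := by
  intro M hM r hr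
  obtain ⟨ε, hε, hεU⟩ := nhds_basis_closedBall.mem_iff.1 (hU.mem_nhds hE0U)
  obtain ⟨K, δ, hδ, hK⟩ :=
    ((hS.analyticAt (hU.mem_nhds hE0U)).contDiffAt (n := 2)).exists_norm_sub_sub_fderiv_le
  simp only [hS'.hasFDerivAt.fderiv, ContinuousLinearMap.toSpanSingleton_apply, smul_eq_mul,
    mul_comm _ (T : ℂ)] at hK
  obtain ⟨h0, hh0, hsmall⟩ := (nhdsGT_basis 0).eventually_iff.1 <|
    (((tendsto_mul_log_one_div_pow_nhdsGT_zero 1).const_mul (r + M)).eventually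
      (ge_mem_nhds (by rw [mul_zero]; exact lt_min hδ hε))).and
    ((tendsto_mul_log_one_div_pow_nhdsGT_zero 2).eventually (ge_mem_nhds one_pos))
  refine ⟨T⁻¹ * (|Real.log (v * √E0 / (π * ‖W0‖))| + (K * (r + M) * M + 1)), by positivity,
    h0, hh0, fun h hh E hre himlow himhi heq => ?_⟩
  obtain ⟨hρ, hL2⟩ := hsmall hh
  rw [pow_one] at hρ
  set L := Real.log (1 / h)
  have hEim : |E.im| ≤ M * (h * L) := abs_le.2 ⟨by linarith, by nlinarith⟩
  have hE : E ∈ closedBall (E0 : ℂ) ((r + M) * (h * L)) := by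
    convert mem_closedBall_ofReal_of_abs_re_sub_le hre hEim using 2; ring
  have hest := abs_im_sub_mul_im_le (hK _ (hρ.trans (min_le_left _ _)))
    (fun x hx => hreal x (hεU (closedBall_subset_closedBall (hρ.trans (min_le_right _ _)) hx))) hE
  have hhL : 0 ≤ h * L := by nlinarith [abs_nonneg E.im]
  have herr : K * ((r + M) * (h * L)) * |E.im| ≤ (K * (r + M) * M + 1) * h :=
    calc K * ((r + M) * (h * L)) * |E.im| ≤ K * ((r + M) * (h * L)) * (M * (h * L)) := by gcongr
      _ = K * (r + M) * M * (h * L ^ 2) * h := by ring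
      _ ≤ K * (r + M) * M * 1 * h := by gcongr; exact hh.1.le
      _ ≤ (K * (r + M) * M + 1) * h := by nlinarith [hh.1]
  exact abs_add_inv_mul_le_of_abs_sub_mul_le hT hh.1
    (im_eq_of_mul_exp_div_eq_one (by positivity) hh.1 hW0 (by push_cast; exact heq))
    (hest.trans herr)
end

section
/- Let $a < b$ be real numbers, $E_0 \in \mathbb{R}$, and let $V : \mathbb{R} \to \mathbb{R}$ be continuous with $V(x) < E_0$ for all $x \in [a,b)$ and $V(b) = E_0$, and continuously differentiable on a neighborhood of $b$ with $V'(b) > 0$. Let $\delta > 0$ and let $\beta : (E_0-\delta, E_0+\delta) \to \mathbb{R}$ be a continuously differentiable function with $\beta(E_0) = b$, $V(\beta(E)) = E$ for all $E$, and $V(x) < E$ for all $x \in [a, \beta(E))$. Then the function $A(E) := \int_a^{\beta(E)} \sqrt{E - V(x)}\,dx$ is differentiable at $E_0$ with $A'(E_0) = \frac{1}{2}\int_a^b (E_0 - V(x))^{-1/2}\,dx$. -/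
open MeasureTheory Filter Set Topology Asymptotics
open scoped NNReal Interval

/-!
Split `A(E) = ∫_a^b √(E - V) + ∫_b^{β E} √(E - V)`. Since `|√u - √v| ≤ |u - v| / √v`, the
difference quotients of the first integrand are dominated by `(E₀ - V)^{-1/2}`, which is
integrable because `V'(b) > 0` forces `E₀ - V x ≥ c (b - x)` near `b`; dominated convergence then
differentiates under the integral sign. The second integral runs over an interval of length
`O(|E - E₀|)` on which `E - V = V(β E) - V ≤ K |β E - b|` by the Lipschitz bound on `V` near `b`,
so it is `O(|E - E₀|^{3/2})` and does not contribute to the derivative.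
-/

lemma abs_slope_sqrt_le_inv_sqrt {v : ℝ} (hv : 0 < v) (u : ℝ) :
    |slope Real.sqrt v u| ≤ (√v)⁻¹ := by
  have hsv : 0 < √v := Real.sqrt_pos.mpr hv
  rcases eq_or_ne u v with rfl | huv
  · simp [hsv.le]
  have hduv : 0 < |u - v| := abs_pos.mpr (sub_ne_zero.mpr huv)
  rw [slope_def_field, abs_div, div_le_iff₀ hduv, ← div_eq_inv_mul, le_div_iff₀ hsv]
  rcases le_or_gt 0 u with hu | hu
  · have key : |√u - √v| * (√u + √v) = |u - v| := by
      rw [← abs_of_nonneg (by positivity : (0:ℝ) ≤ √u + √v), ← abs_mul]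
      congr 1
      nlinarith [Real.sq_sqrt hu, Real.sq_sqrt hv.le]
    nlinarith [abs_nonneg (√u - √v), Real.sqrt_nonneg u]
  · rw [Real.sqrt_eq_zero'.mpr hu.le, zero_sub, abs_neg, abs_of_pos hsv, abs_of_neg (by linarith)]
    nlinarith [Real.mul_self_sqrt hv.le]

lemma HasDerivAt.eventually_mul_sub_lt_sub {f : ℝ → ℝ} {f' c x : ℝ} (hf : HasDerivAt f f' x)
    (hc : c < f') : ∀ᶠ y in 𝓝[<] x, c * (x - y) < f x - f y := by
  have hslope : ∀ᶠ y in 𝓝[<] x, c < slope f x y :=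
    ((hasDerivAt_iff_tendsto_slope.mp hf).mono_left (nhdsLT_le_nhdsNE x)).eventually
      (lt_mem_nhds hc)
  filter_upwards [hslope, self_mem_nhdsWithin] with y hy hyx
  rw [slope_def_field, lt_div_iff_of_neg (sub_neg.mpr hyx)] at hy
  linarith

lemma intervalIntegrable_inv_sqrt_of_mul_sub_le {g : ℝ → ℝ} {a b c : ℝ} (hg : Continuous g)
    (hab : a < b) (hpos : ∀ x ∈ Ico a b, 0 < g x) (hc : 0 < c)
    (hlow : ∀ᶠ x in 𝓝[<] b, c * (b - x) ≤ g x) :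
    IntervalIntegrable (fun x => (√(g x))⁻¹) volume a b := by
  obtain ⟨l, hlb, hl⟩ := mem_nhdsLT_iff_exists_Ioo_subset.mp hlow
  set m := max a l
  have hmb : m < b := max_lt hab hlb
  refine IntervalIntegrable.trans (b := m) ?_ ?_
  · refine ContinuousOn.intervalIntegrable fun x hx => ?_
    rw [uIcc_of_le (le_max_left a l)] at hx
    exact ((hg.sqrt.continuousAt).inv₀
      (Real.sqrt_pos.mpr (hpos x ⟨hx.1, hx.2.trans_lt hmb⟩)).ne').continuousWithinAt
  · have hdom : IntervalIntegrable (fun x => (√c)⁻¹ * (b - x) ^ (-(2⁻¹ : ℝ))) volume m b := by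
      have := ((intervalIntegral.intervalIntegrable_rpow' (r := -(2⁻¹ : ℝ)) (by norm_num)
        (a := 0) (b := b - m)).comp_sub_left b).const_mul (√c)⁻¹
      simpa using this.symm
    refine hdom.mono_fun' ?_ ?_
    · exact hg.sqrt.measurable.inv.aestronglyMeasurable
    · rw [uIoc_of_le hmb.le, ← Measure.restrict_congr_set Ioo_ae_eq_Ioc]
      filter_upwards [ae_restrict_mem measurableSet_Ioo] with x hx
      have hbx : 0 < b - x := sub_pos.mpr hx.2
      have hcx : 0 < √(c * (b - x)) := Real.sqrt_pos.mpr (by positivity)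
      calc ‖(√(g x))⁻¹‖ = (√(g x))⁻¹ := Real.norm_of_nonneg (by positivity)
        _ ≤ (√(c * (b - x)))⁻¹ :=
          inv_anti₀ hcx (Real.sqrt_le_sqrt (hl ⟨(le_max_right a l).trans_lt hx.1, hx.2⟩))
        _ = (√c)⁻¹ * (b - x) ^ (-(2⁻¹ : ℝ)) := by
          rw [Real.sqrt_mul hc.le, mul_inv, Real.rpow_neg hbx.le, Real.sqrt_eq_rpow (b - x),
            one_div]

lemma hasDerivAt_integral_sqrt_sub {V : ℝ → ℝ} {a b E₀ : ℝ} (hab : a ≤ b) (hV : Continuous V)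
    (hlt : ∀ x ∈ Ioo a b, V x < E₀)
    (hint : IntervalIntegrable (fun x => (√(E₀ - V x))⁻¹) volume a b) :
    HasDerivAt (fun E => ∫ x in a..b, √(E - V x))
      ((1 / 2) * ∫ x in a..b, (√(E₀ - V x))⁻¹) E₀ := by
  have hsqrt : ∀ E, Continuous fun x => √(E - V x) := fun E => (continuous_const.sub hV).sqrt
  have hIoo : ∀ᵐ x, x ∈ Ι a b → x ∈ Ioo a b := by
    filter_upwards [Measure.ae_ne volume b] with x hxb hx
    rw [uIoc_of_le hab] at hx
    exact ⟨hx.1, hx.2.lt_of_ne hxb⟩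
  have hslope : ∀ E, slope (fun E => ∫ x in a..b, √(E - V x)) E₀ E
      = ∫ x in a..b, slope (fun E => √(E - V x)) E₀ E := by
    intro E
    simp only [slope_def_field]
    rw [intervalIntegral.integral_div, intervalIntegral.integral_sub
      ((hsqrt E).intervalIntegrable a b) ((hsqrt E₀).intervalIntegrable a b)]
  rw [hasDerivAt_iff_tendsto_slope, funext hslope, ← intervalIntegral.integral_const_mul]
  refine intervalIntegral.tendsto_integral_filter_of_dominated_convergence _
    (Eventually.of_forall fun E => ?_) (Eventually.of_forall fun E => ?_) hint ?_
  · refine Continuous.aestronglyMeasurable ?_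
    simp only [slope_def_field]
    fun_prop
  · filter_upwards [hIoo] with x hx hxI
    have hv : 0 < E₀ - V x := sub_pos.mpr (hlt x (hx hxI))
    have hshift : slope (fun E => √(E - V x)) E₀ E = slope Real.sqrt (E₀ - V x) (E - V x) := by
      simp only [slope_def_field, sub_sub_sub_cancel_right]
    rw [Real.norm_eq_abs, hshift]
    exact abs_slope_sqrt_le_inv_sqrt hv _
  · filter_upwards [hIoo] with x hx hxI
    have hv : 0 < E₀ - V x := sub_pos.mpr (hlt x (hx hxI))
    have hd : HasDerivAt (fun E => √(E - V x)) (1 / 2 * (√(E₀ - V x))⁻¹) E₀ := by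
      convert ((hasDerivAt_id' E₀).sub_const (V x)).sqrt hv.ne' using 1
      ring
    exact hasDerivAt_iff_tendsto_slope.mp hd

lemma abs_integral_sqrt_sub_le_of_lipschitzOnWith {V : ℝ → ℝ} {K : ℝ≥0} {s : Set ℝ} {b y : ℝ}
    (hV : LipschitzOnWith K V s) (hs : [[b, y]] ⊆ s) :
    |∫ x in b..y, √(V y - V x)| ≤ √(K * |y - b|) * |y - b| := by
  rw [← Real.norm_eq_abs]
  refine intervalIntegral.norm_integral_le_of_norm_le_const fun x hx => ?_
  have hx : x ∈ [[b, y]] := uIoc_subset_uIcc hx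
  have hy : y ∈ [[b, y]] := right_mem_uIcc
  rw [Real.norm_of_nonneg (Real.sqrt_nonneg _)]
  refine Real.sqrt_le_sqrt ?_
  calc V y - V x ≤ |V y - V x| := le_abs_self _
    _ ≤ K * |y - x| := by simpa [Real.dist_eq] using hV.dist_le_mul y (hs hy) x (hs hx)
    _ ≤ K * |y - b| := mul_le_mul_of_nonneg_left (abs_sub_right_of_mem_uIcc hx) K.coe_nonneg

lemma hasDerivAt_integral_sqrt_sub_to_turning_point {V β : ℝ → ℝ} {b E₀ : ℝ}
    (hV : ContDiffAt ℝ 1 V b) (hβ : DifferentiableAt ℝ β E₀) (hβE₀ : β E₀ = b)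
    (hβV : ∀ᶠ E in 𝓝 E₀, V (β E) = E) :
    HasDerivAt (fun E => ∫ x in b..β E, √(E - V x)) 0 E₀ := by
  obtain ⟨K, t, ht, hK⟩ := hV.exists_lipschitzOnWith
  obtain ⟨ε, hε, hεt⟩ := Metric.mem_nhds_iff.mp ht
  have hβb : Tendsto β (𝓝 E₀) (𝓝 b) := hβE₀ ▸ hβ.continuousAt.tendsto
  have hsub : ∀ᶠ E in 𝓝 E₀, [[b, β E]] ⊆ t := by
    filter_upwards [hβb (Metric.ball_mem_nhds b hε)] with E hE
    rw [← segment_eq_uIcc]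
    exact ((convex_ball b ε).segment_subset (Metric.mem_ball_self hε) hE).trans hεt
  have hsmall : (fun E => √(K * |β E - b|)) =o[𝓝 E₀] (fun _ => (1 : ℝ)) := by
    refine (isLittleO_one_iff ℝ).mpr ?_
    have : Tendsto (fun E => √(K * |β E - b|)) (𝓝 E₀) (𝓝 √(K * |b - b|)) :=
      ((hβb.sub_const b).abs.const_mul _).sqrt
    simpa using this
  have hlin : (fun E => |β E - b|) =O[𝓝 E₀] (fun E => E - E₀) := by
    simpa [hβE₀] using hβ.isBigO_sub.abs_left
  rw [hasDerivAt_iff_isLittleO]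
  refine IsBigO.trans_isLittleO (IsBigO.of_bound' ?_) (by simpa using hsmall.mul_isBigO hlin)
  filter_upwards [hsub, hβV] with E hE hEV
  have hbound := abs_integral_sqrt_sub_le_of_lipschitzOnWith hK hE
  rw [hEV] at hbound
  simpa [hβE₀, abs_of_nonneg (Real.sqrt_nonneg _)] using hbound

theorem stmt_9_general (a b E0 : ℝ) (hab : a < b) (V : ℝ → ℝ)
    (hVcont : Continuous V)
    (hVlt : ∀ x ∈ Set.Ico a b, V x < E0)
    (hVb : V b = E0)
    (hC1 : ContDiffAt ℝ 1 V b)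
    (hV'b : 0 < deriv V b)
    (δ : ℝ) (hδ : 0 < δ) (β : ℝ → ℝ)
    (hβC1 : ContDiffOn ℝ 1 β (Set.Ioo (E0 - δ) (E0 + δ)))
    (hβE0 : β E0 = b)
    (hβV : ∀ E ∈ Set.Ioo (E0 - δ) (E0 + δ), V (β E) = E)
    (A : ℝ → ℝ)
    (hA : ∀ E ∈ Set.Ioo (E0 - δ) (E0 + δ), A E = ∫ x in a..(β E), Real.sqrt (E - V x)) :
    HasDerivAt A ((1 / 2) * ∫ x in a..b, (Real.sqrt (E0 - V x))⁻¹) E0 := by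
  have hnhds : Ioo (E0 - δ) (E0 + δ) ∈ 𝓝 E0 :=
    isOpen_Ioo.mem_nhds ⟨by linarith, by linarith⟩
  have hlow : ∀ᶠ x in 𝓝[<] b, deriv V b / 2 * (b - x) ≤ E0 - V x := by
    filter_upwards [((hC1.differentiableAt one_ne_zero).hasDerivAt.eventually_mul_sub_lt_sub
      (half_lt_self hV'b))] with x hx
    rw [← hVb]
    exact hx.le
  have hint : IntervalIntegrable (fun x => (√(E0 - V x))⁻¹) volume a b :=
    intervalIntegrable_inv_sqrt_of_mul_sub_le (continuous_const.sub hVcont) hab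
      (fun x hx => sub_pos.mpr (hVlt x hx)) (half_pos hV'b) hlow
  have hbulk := hasDerivAt_integral_sqrt_sub hab.le hVcont
    (fun x hx => hVlt x (Ioo_subset_Ico_self hx)) hint
  have hboundary := hasDerivAt_integral_sqrt_sub_to_turning_point hC1
    ((hβC1.contDiffAt hnhds).differentiableAt one_ne_zero) hβE0 (eventually_of_mem hnhds hβV)
  refine ((hbulk.add hboundary).congr_of_eventuallyEq ?_).congr_deriv (add_zero _)
  filter_upwards [hnhds] with E hE
  have hsqrt : Continuous fun x => √(E - V x) := (continuous_const.sub hVcont).sqrt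
  rw [hA E hE, Pi.add_apply, intervalIntegral.integral_add_adjacent_intervals
    (hsqrt.intervalIntegrable _ _) (hsqrt.intervalIntegrable _ _)]

/-- Differentiation of the action integral at a simple turning point: with `V` continuous,
`V < E₀` on `[a,b)`, `V(b) = E₀`, `V` `C¹` near `b` with `V'(b) > 0`, and `β` a `C¹` branch of
turning points with `β(E₀) = b`, `V(β(E)) = E`, and `V < E` on `[a, β(E))`, the function
`A(E) = ∫_a^{β(E)} √(E - V)` is differentiable at `E₀` with
`A'(E₀) = (1/2)∫_a^b (E₀ - V)^{-1/2}`. -/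
theorem stmt_9 (a b E0 : ℝ) (hab : a < b) (V : ℝ → ℝ)
    (hVcont : Continuous V)
    (hVlt : ∀ x ∈ Set.Ico a b, V x < E0)
    (hVb : V b = E0)
    (hC1 : ContDiffAt ℝ 1 V b)
    (hV'b : 0 < deriv V b)
    (δ : ℝ) (hδ : 0 < δ) (β : ℝ → ℝ)
    (hβC1 : ContDiffOn ℝ 1 β (Set.Ioo (E0 - δ) (E0 + δ)))
    (hβE0 : β E0 = b)
    (hβV : ∀ E ∈ Set.Ioo (E0 - δ) (E0 + δ), V (β E) = E)
    (hβlt : ∀ E ∈ Set.Ioo (E0 - δ) (E0 + δ), ∀ x ∈ Set.Ico a (β E), V x < E)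
    (A : ℝ → ℝ)
    (hA : ∀ E ∈ Set.Ioo (E0 - δ) (E0 + δ), A E = ∫ x in a..(β E), Real.sqrt (E - V x)) :
    HasDerivAt A ((1 / 2) * ∫ x in a..b, (Real.sqrt (E0 - V x))⁻¹) E0 :=
  stmt_9_general a b E0 hab V hVcont hVlt hVb hC1 hV'b δ hδ β hβC1 hβE0 hβV A hA
end

section
/- Let $I = (\alpha, \beta) \subseteq \mathbb{R}$ be an open interval, let $V_1, V_2, r_0, r_1 : \mathbb{R} \to \mathbb{R}$ be smooth, and let $E \in \mathbb{R}$ satisfy $E - V_1(x) > 0$ and $V_1(x) \neq V_2(x)$ for all $x \in I$. Fix $x_0 \in I$ and define on $I$: $\phi(x) := \int_{x_0}^x \sqrt{E - V_1(t)}\,dt$, $\sigma_{1}(x) := (E - V_1(x))^{-1/4}$, $\sigma_{2}(x) := \dfrac{r_0(x) - i r_1(x)\sqrt{E - V_1(x)}}{(V_1(x) - V_2(x))\,(E - V_1(x))^{1/4}}$, and for $h > 0$ the functions $w_1(x) := e^{i\phi(x)/h}\sigma_{1}(x)$ and $w_2(x) := h\, e^{i\phi(x)/h}\sigma_{2}(x)$.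 Then for every compact set $J \subseteq I$ there exists $C > 0$ such that for all $h \in (0,1]$ and all $x \in J$: $\left| -h^2 w_1''(x) + (V_1(x) - E) w_1(x) + h\big(r_0(x) w_2(x) + h\, r_1(x) w_2'(x)\big) \right| \le C h^2$ and $\left| h\big(r_0(x) w_1(x) - h\, (r_1 w_1)'(x)\big) - h^2 w_2''(x) + (V_2(x) - E) w_2(x) \right| \le C h^2$. -/
open scoped ContDiff

private lemma wkb_alg1 (h g e s ds σ1 d1 dd1 σ2 d2 a r0 r1 : ℂ)
    (hinv : h * g = 1) (hs2 : s * s = a) (htr : ds * σ1 + 2 * s * d1 = 0) :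
    -h^2 * (e * (Complex.I*s*g * (Complex.I*s*g*σ1 + d1)
        + (Complex.I*ds*g*σ1 + Complex.I*s*g*d1 + dd1)))
      + (-a) * (e * σ1)
      + h * (r0 * (h * (e * σ2)) + h * r1 * (e * (Complex.I*s*σ2 + h*d2)))
    = h^2 * e * ((-dd1 + (r0 + Complex.I*s*r1)*σ2) + h * (r1 * d2)) := by
  have hj : Complex.I * Complex.I = -1 := Complex.I_mul_I
  linear_combination (e*σ1)*hs2 + (e*s*s*σ1*(h*g+1))*hinv + (-(h^2)*e*Complex.I*g)*htr
    + (-(h^2)*e*s*s*g*g*σ1)*hj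

private lemma wkb_alg2 (h g e s ds σ1 d1 σ2 d2 dd2 a b r0 r1 dr1 : ℂ)
    (hinv : h * g = 1) (hs2 : s * s = a)
    (hcross : (r0 - Complex.I*s*r1) * σ1 + b * σ2 = 0) :
    h * (r0 * (e*σ1) - h * (dr1 * (e*σ1) + r1 * (e * (Complex.I*s*g*σ1 + d1))))
      - h^2 * (e * (Complex.I*s*g * (Complex.I*s*σ2 + h*d2)
        + (Complex.I*ds*σ2 + Complex.I*s*d2 + h*dd2)))
      + (b - a) * (h*(e*σ2))
    = h^2 * e * ((-(dr1*σ1 + r1*d1) - Complex.I*(ds*σ2 + 2*s*d2)) + h * (-dd2)) := by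
  have hj : Complex.I * Complex.I = -1 := Complex.I_mul_I
  linear_combination (h*e)*hcross + (h*e*σ2)*hs2
    + (-(h*r1*e*Complex.I*s*σ1) - h*e*Complex.I*Complex.I*s*s*σ2
        - h^2*e*Complex.I*s*d2)*hinv + (-(h*e*s*s*σ2))*hj

open Complex in
/-- WKB solution of the 2×2 Schrödinger system: with phase `φ = ∫√(E - V₁)` and symbols
`σ₁ = (E - V₁)^{-1/4}`, `σ₂ = (r₀ - i r₁ √(E - V₁)) / ((V₁ - V₂)(E - V₁)^{1/4})`, the vector
`w = e^{iφ/h}(σ₁, hσ₂)ᵀ` satisfies `(P(h) - E)w = O(h²)` uniformly on compact subsets of an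
interval where `E - V₁ > 0` and `V₁ ≠ V₂`. -/
theorem stmt_11 (α β : ℝ) (V1 V2 r0 r1 : ℝ → ℝ)
    (hV1 : ContDiff ℝ (⊤ : ℕ∞) V1) (hV2 : ContDiff ℝ (⊤ : ℕ∞) V2)
    (hr0 : ContDiff ℝ (⊤ : ℕ∞) r0) (hr1 : ContDiff ℝ (⊤ : ℕ∞) r1)
    (E : ℝ)
    (hE : ∀ x ∈ Set.Ioo α β, V1 x < E)
    (hneq : ∀ x ∈ Set.Ioo α β, V1 x ≠ V2 x)
    (x0 : ℝ) (hx0 : x0 ∈ Set.Ioo α β)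
    (φ : ℝ → ℝ) (hφ : ∀ x, φ x = ∫ t in x0..x, Real.sqrt (E - V1 t))
    (σ1 σ2 : ℝ → ℂ)
    (hσ1 : ∀ x, σ1 x = ((E - V1 x) ^ (-(1/4 : ℝ)) : ℝ))
    (hσ2 : ∀ x, σ2 x =
      ((r0 x : ℂ) - Complex.I * (r1 x : ℂ) * (Real.sqrt (E - V1 x) : ℝ)) /
        (((V1 x - V2 x : ℝ) : ℂ) * (((E - V1 x) ^ ((1/4 : ℝ)) : ℝ) : ℂ)))
    (w1 w2 : ℝ → ℝ → ℂ)
    (hw1 : ∀ h x, w1 h x = Complex.exp (Complex.I * (φ x : ℂ) / (h : ℂ)) * σ1 x)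
    (hw2 : ∀ h x, w2 h x = (h : ℂ) * Complex.exp (Complex.I * (φ x : ℂ) / (h : ℂ)) * σ2 x) :
    ∀ J : Set ℝ, IsCompact J → J ⊆ Set.Ioo α β →
      ∃ C > 0, ∀ h ∈ Set.Ioc (0:ℝ) 1, ∀ x ∈ J,
        norm (-(h : ℂ) ^ 2 * deriv (deriv (w1 h)) x
            + ((V1 x - E : ℝ) : ℂ) * w1 h x
            + (h : ℂ) * ((r0 x : ℂ) * w2 h x + (h : ℂ) * (r1 x : ℂ) * deriv (w2 h) x))
          ≤ C * h ^ 2 ∧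
        norm ((h : ℂ) * ((r0 x : ℂ) * w1 h x
              - (h : ℂ) * deriv (fun y => ((r1 y : ℝ) : ℂ) * w1 h y) x)
            - (h : ℂ) ^ 2 * deriv (deriv (w2 h)) x
            + ((V2 x - E : ℝ) : ℂ) * w2 h x)
          ≤ C * h ^ 2 := by
  intro J hJc hJI
  have hIo : IsOpen (Set.Ioo α β) := isOpen_Ioo
  have hapos : ∀ x ∈ Set.Ioo α β, 0 < E - V1 x := fun x hx => sub_pos.2 (hE x hx)
  have hane : ∀ x ∈ Set.Ioo α β, E - V1 x ≠ 0 := fun x hx => ne_of_gt (hapos x hx)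
  -- basic smoothness
  have hV1i : ContDiff ℝ ∞ V1 := hV1.of_le (by simp)
  have hV2i : ContDiff ℝ ∞ V2 := hV2.of_le (by simp)
  have hr0i : ContDiff ℝ ∞ r0 := hr0.of_le (by simp)
  have hr1i : ContDiff ℝ ∞ r1 := hr1.of_le (by simp)
  have haCD : ContDiff ℝ ∞ (fun x => E - V1 x) := contDiff_const.sub hV1i
  set s : ℝ → ℝ := fun x => Real.sqrt (E - V1 x) with hs_def
  set da : ℝ → ℝ := deriv V1 with hda_def
  set dr1 : ℝ → ℝ := deriv r1 with hdr1_def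
  have hsCD : ContDiffOn ℝ ∞ s (Set.Ioo α β) := haCD.contDiffOn.sqrt hane
  have hσ1CD : ContDiffOn ℝ ∞ σ1 (Set.Ioo α β) := by
    have h1 : ContDiffOn ℝ ∞ (fun x => (E - V1 x) ^ (-(1/4:ℝ))) (Set.Ioo α β) :=
      haCD.contDiffOn.rpow_const_of_ne hane
    have h2 := Complex.ofRealCLM.contDiff.comp_contDiffOn h1
    exact h2.congr fun x _ => hσ1 x
  have hsqCD : ContDiffOn ℝ ∞ (fun x => (E - V1 x) ^ ((1/4:ℝ))) (Set.Ioo α β) :=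
    haCD.contDiffOn.rpow_const_of_ne hane
  have hr0C : ContDiff ℝ ∞ (fun x => ((r0 x : ℝ) : ℂ)) :=
    Complex.ofRealCLM.contDiff.comp hr0i
  have hr1C : ContDiff ℝ ∞ (fun x => ((r1 x : ℝ) : ℂ)) :=
    Complex.ofRealCLM.contDiff.comp hr1i
  have hsC : ContDiffOn ℝ ∞ (fun x => ((s x : ℝ) : ℂ)) (Set.Ioo α β) :=
    Complex.ofRealCLM.contDiff.comp_contDiffOn hsCD
  have hσ2CD : ContDiffOn ℝ ∞ σ2 (Set.Ioo α β) := by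
    have hnum : ContDiffOn ℝ ∞
        (fun x => ((r0 x : ℂ) - Complex.I * (r1 x : ℂ) * ((s x : ℝ) : ℂ))) (Set.Ioo α β) :=
      hr0C.contDiffOn.sub (((contDiff_const.mul hr1C).contDiffOn).mul hsC)
    have hden : ContDiffOn ℝ ∞
        (fun x => ((V1 x - V2 x : ℝ) : ℂ) * (((E - V1 x) ^ ((1/4:ℝ)) : ℝ) : ℂ))
        (Set.Ioo α β) :=
      ((Complex.ofRealCLM.contDiff.comp (hV1i.sub hV2i)).contDiffOn).mul
        (Complex.ofRealCLM.contDiff.comp_contDiffOn hsqCD)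
    have hden_ne : ∀ x ∈ Set.Ioo α β,
        ((V1 x - V2 x : ℝ) : ℂ) * (((E - V1 x) ^ ((1/4:ℝ)) : ℝ) : ℂ) ≠ 0 := by
      intro x hx
      refine mul_ne_zero ?_ ?_
      · exact_mod_cast sub_ne_zero.2 (hneq x hx)
      · exact_mod_cast (Real.rpow_pos_of_pos (hapos x hx) _).ne'
    exact (hnum.mul (hden.inv hden_ne)).congr fun x hx => by
      rw [hσ2 x, div_eq_mul_inv]; rfl
  -- derivative functions
  set d1 : ℝ → ℂ := deriv σ1 with hd1_def
  set d2 : ℝ → ℂ := deriv σ2 with hd2_def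
  set dd1 : ℝ → ℂ := deriv d1 with hdd1_def
  set dd2 : ℝ → ℂ := deriv d2 with hdd2_def
  set ds : ℝ → ℝ := deriv s with hds_def
  have hd1CD : ContDiffOn ℝ ∞ d1 (Set.Ioo α β) :=
    ((contDiffOn_infty_iff_deriv_of_isOpen hIo).1 hσ1CD).2
  have hd2CD : ContDiffOn ℝ ∞ d2 (Set.Ioo α β) :=
    ((contDiffOn_infty_iff_deriv_of_isOpen hIo).1 hσ2CD).2
  have hdsCD : ContDiffOn ℝ ∞ ds (Set.Ioo α β) :=
    ((contDiffOn_infty_iff_deriv_of_isOpen hIo).1 hsCD).2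
  -- generic differentiation helpers
  have hDC : ∀ (f : ℝ → ℂ), ContDiffOn ℝ ∞ f (Set.Ioo α β) →
      ∀ x ∈ Set.Ioo α β, HasDerivAt f (deriv f x) x := fun f hf x hx =>
    ((hf.contDiffAt (hIo.mem_nhds hx)).differentiableAt (by norm_num)).hasDerivAt
  have hDR : ∀ (f : ℝ → ℝ), ContDiffOn ℝ ∞ f (Set.Ioo α β) →
      ∀ x ∈ Set.Ioo α β, HasDerivAt f (deriv f x) x := fun f hf x hx =>
    ((hf.contDiffAt (hIo.mem_nhds hx)).differentiableAt (by norm_num)).hasDerivAt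
  have hσ1d : ∀ x ∈ Set.Ioo α β, HasDerivAt σ1 (d1 x) x := hDC σ1 hσ1CD
  have hσ2d : ∀ x ∈ Set.Ioo α β, HasDerivAt σ2 (d2 x) x := hDC σ2 hσ2CD
  have hd1d : ∀ x ∈ Set.Ioo α β, HasDerivAt d1 (dd1 x) x := hDC d1 hd1CD
  have hd2d : ∀ x ∈ Set.Ioo α β, HasDerivAt d2 (dd2 x) x := hDC d2 hd2CD
  have hsd : ∀ x ∈ Set.Ioo α β, HasDerivAt s (ds x) x := hDR s hsCD
  have hV1d : ∀ x, HasDerivAt V1 (da x) x := fun x =>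
    (hV1i.differentiable (by norm_num) x).hasDerivAt
  have hr1d : ∀ x, HasDerivAt r1 (dr1 x) x := fun x =>
    (hr1i.differentiable (by norm_num) x).hasDerivAt
  have hAd : ∀ x, HasDerivAt (fun y => E - V1 y) (-(da x)) x := fun x => by
    have := (hasDerivAt_const x E).sub (hV1d x); rw [zero_sub] at this; exact this
  -- explicit first-derivative formulas
  have hds_eq : ∀ x ∈ Set.Ioo α β, ds x = -(da x) / (2 * s x) := by
    intro x hx
    have := ((hAd x).sqrt (hane x hx)).deriv
    rw [hds_def, hs_def]
    exact this
  have hd1_eq : ∀ x ∈ Set.Ioo α β,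
      d1 x = ((-(da x) * (-(1/4:ℝ)) * (E - V1 x) ^ (-(1/4:ℝ) - 1) : ℝ) : ℂ) := by
    intro x hx
    have hu : HasDerivAt (fun y => (E - V1 y) ^ (-(1/4:ℝ)))
        (-(da x) * (-(1/4:ℝ)) * (E - V1 x) ^ (-(1/4:ℝ) - 1)) x :=
      (hAd x).rpow_const (Or.inl (hane x hx))
    have h2 : HasDerivAt σ1
        ((( -(da x) * (-(1/4:ℝ)) * (E - V1 x) ^ (-(1/4:ℝ) - 1) : ℝ)) : ℂ) x := by
      have h3 := hu.ofReal_comp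
      have h4 : σ1 = fun y => (((E - V1 y) ^ (-(1/4:ℝ)) : ℝ) : ℂ) := funext hσ1
      rw [h4]; exact h3
    rw [hd1_def]
    exact h2.deriv
  -- phase derivative
  have hscont : Continuous s := Real.continuous_sqrt.comp (continuous_const.sub hV1.continuous)
  have hφd : ∀ x, HasDerivAt φ (s x) x := by
    intro x
    have h1 : HasDerivAt (fun u => ∫ t in x0..u, s t) (s x) x :=
      intervalIntegral.integral_hasDerivAt_right (hscont.intervalIntegrable x0 x)
        (hscont.stronglyMeasurable.stronglyMeasurableAtFilter) hscont.continuousAt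
    have h2 : φ = fun u => ∫ t in x0..u, s t := funext hφ
    rw [h2]; exact h1
  set eh : ℝ → ℝ → ℂ := fun h x => Complex.exp (Complex.I * (φ x : ℂ) / (h : ℂ)) with heh_def
  have habs_eh : ∀ (h : ℝ), ∀ x, ‖eh h x‖ = 1 := by
    intro h x
    rw [heh_def]
    have : Complex.I * (φ x : ℂ) / (h : ℂ) = ((φ x / h : ℝ) : ℂ) * Complex.I := by
      push_cast; ring
    simp only [this, Complex.norm_exp_ofReal_mul_I]
  -- key pointwise identities
  have hs2 : ∀ x ∈ Set.Ioo α β, ((s x : ℝ) : ℂ) * ((s x : ℝ) : ℂ) = ((E - V1 x : ℝ) : ℂ) := by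
    intro x hx
    rw [hs_def]
    exact_mod_cast congrArg Complex.ofReal (Real.mul_self_sqrt (hapos x hx).le)
  have htrans : ∀ x ∈ Set.Ioo α β,
      ((ds x : ℝ) : ℂ) * σ1 x + 2 * ((s x : ℝ) : ℂ) * d1 x = 0 := by
    intro x hx
    rw [hds_eq x hx, hd1_eq x hx, hσ1 x]
    have hrw : (E - V1 x) ^ (-(1/4:ℝ)) = (E - V1 x) ^ (-(1/4:ℝ) - 1) * (E - V1 x) := by
      rw [← Real.rpow_add_one (hane x hx) (-(1/4:ℝ) - 1)]
      norm_num
    have hss : s x * s x = E - V1 x := by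
      rw [hs_def]; exact Real.mul_self_sqrt (hapos x hx).le
    have hs0 : s x ≠ 0 := by
      rw [hs_def]; exact (Real.sqrt_pos.2 (hapos x hx)).ne'
    push_cast
    rw [hrw, ← hss]
    have hsC0 : ((s x : ℝ) : ℂ) ≠ 0 := by exact_mod_cast hs0
    field_simp
    try ring
    push_cast; ring
  have hcross : ∀ x ∈ Set.Ioo α β,
      ((r0 x : ℂ) - Complex.I * ((s x : ℝ) : ℂ) * (r1 x : ℂ)) * σ1 x
        + ((V2 x - V1 x : ℝ) : ℂ) * σ2 x = 0 := by
    intro x hx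
    rw [hσ1 x, hσ2 x]
    have hq : (((E - V1 x) ^ ((1/4:ℝ)) : ℝ) : ℂ) ≠ 0 := by
      exact_mod_cast (Real.rpow_pos_of_pos (hapos x hx) _).ne'
    have hv : ((V1 x - V2 x : ℝ) : ℂ) ≠ 0 := by
      exact_mod_cast sub_ne_zero.2 (hneq x hx)
    have hinvq : (((E - V1 x) ^ (-(1/4:ℝ)) : ℝ) : ℂ)
        = ((((E - V1 x) ^ ((1/4:ℝ)) : ℝ) : ℂ))⁻¹ := by
      rw [← Complex.ofReal_inv, ← Real.rpow_neg (hapos x hx).le]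
    have key : ∀ (q v z : ℂ), q ≠ 0 → v ≠ 0 → z * q⁻¹ + (-v) * (z / (v * q)) = 0 := by
      intro q v z hq hv; field_simp; ring
    have hk := key (((E - V1 x) ^ ((1/4:ℝ)) : ℝ) : ℂ) ((V1 x - V2 x : ℝ) : ℂ)
      ((r0 x : ℂ) - Complex.I * (r1 x : ℂ) * ((Real.sqrt (E - V1 x) : ℝ) : ℂ)) hq hv
    rw [hinvq, hs_def]
    push_cast at hk ⊢
    linear_combination hk
  -- continuity of the error coefficients
  set A1 : ℝ → ℂ := fun x => -dd1 x
      + ((r0 x : ℂ) + Complex.I * ((s x : ℝ) : ℂ) * (r1 x : ℂ)) * σ2 x with hA1_def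
  set B1 : ℝ → ℂ := fun x => (r1 x : ℂ) * d2 x with hB1_def
  set A2 : ℝ → ℂ := fun x => -(((dr1 x : ℝ) : ℂ) * σ1 x + (r1 x : ℂ) * d1 x)
      - Complex.I * (((ds x : ℝ) : ℂ) * σ2 x + 2 * ((s x : ℝ) : ℂ) * d2 x) with hA2_def
  set B2 : ℝ → ℂ := fun x => -dd2 x with hB2_def
  have hdd1c : ContinuousOn dd1 (Set.Ioo α β) :=
    hd1CD.continuousOn_deriv_of_isOpen hIo (by norm_num)
  have hdd2c : ContinuousOn dd2 (Set.Ioo α β) :=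
    hd2CD.continuousOn_deriv_of_isOpen hIo (by norm_num)
  have hdsCc : ContinuousOn (fun x => ((ds x : ℝ) : ℂ)) (Set.Ioo α β) :=
    Complex.continuous_ofReal.comp_continuousOn hdsCD.continuousOn
  have hdr1Cc : Continuous (fun x => ((dr1 x : ℝ) : ℂ)) := by
    have : ContDiff ℝ ∞ (deriv r1) := (contDiff_infty_iff_deriv.mp hr1i).2
    exact Complex.continuous_ofReal.comp this.continuous
  have hA1c : ContinuousOn A1 (Set.Ioo α β) := by
    rw [hA1_def]
    exact (hdd1c.neg).add
      (((hr0C.continuous.continuousOn).add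
        ((continuous_const.mul hr1C.continuous).continuousOn.mul hsC.continuousOn |>.congr
          (fun x _ => by simp only [Pi.mul_apply]; exact mul_right_comm _ _ _))).mul hσ2CD.continuousOn)
  have hB1c : ContinuousOn B1 (Set.Ioo α β) := by
    rw [hB1_def]
    exact (hr1C.continuous.continuousOn).mul hd2CD.continuousOn
  have hA2c : ContinuousOn A2 (Set.Ioo α β) := by
    rw [hA2_def]
    exact (((hdr1Cc.continuousOn).mul hσ1CD.continuousOn).add
      ((hr1C.continuous.continuousOn).mul hd1CD.continuousOn)).neg.sub
      ((continuousOn_const).mul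
        ((hdsCc.mul hσ2CD.continuousOn).add
          ((continuous_const.continuousOn.mul hsC.continuousOn).mul hd2CD.continuousOn)))
  have hB2c : ContinuousOn B2 (Set.Ioo α β) := by
    rw [hB2_def]; exact hdd2c.neg
  obtain ⟨C1, hC1⟩ := hJc.exists_bound_of_continuousOn (hA1c.mono hJI)
  obtain ⟨C2, hC2⟩ := hJc.exists_bound_of_continuousOn (hB1c.mono hJI)
  obtain ⟨C3, hC3⟩ := hJc.exists_bound_of_continuousOn (hA2c.mono hJI)
  obtain ⟨C4, hC4⟩ := hJc.exists_bound_of_continuousOn (hB2c.mono hJI)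
  refine ⟨max C1 0 + max C2 0 + max C3 0 + max C4 0 + 1, by positivity, ?_⟩
  intro h hh x hxJ
  have hh0 : (0:ℝ) < h := hh.1
  have hh1 : h ≤ 1 := hh.2
  have hhne : (h : ℂ) ≠ 0 := by exact_mod_cast hh0.ne'
  have hinv : (h : ℂ) * ((h : ℂ))⁻¹ = 1 := mul_inv_cancel₀ hhne
  have hxI : x ∈ Set.Ioo α β := hJI hxJ
  -- function forms
  have hw1fun : w1 h = fun y => eh h y * σ1 y := by
    funext y; rw [hw1 h y, heh_def]
  have hw2fun : w2 h = fun y => (h : ℂ) * (eh h y * σ2 y) := by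
    funext y; rw [hw2 h y, heh_def]; ring
  -- derivative of the exponential
  have hehd : ∀ y, HasDerivAt (eh h)
      (eh h y * (Complex.I * ((s y : ℝ) : ℂ) * ((h:ℂ))⁻¹)) y := by
    intro y
    have h1 : HasDerivAt (fun z => Complex.I * (φ z : ℂ) / (h : ℂ))
        (Complex.I * ((s y : ℝ) : ℂ) / (h : ℂ)) y :=
      (((hφd y).ofReal_comp).const_mul Complex.I).div_const _
    have h2 := h1.cexp
    rw [heh_def]
    convert h2 using 1
    try rw [heh_def]
    try ring
  -- first derivatives of w1, w2
  have hW1 : ∀ y ∈ Set.Ioo α β, HasDerivAt (w1 h)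
      (eh h y * (Complex.I * ((s y : ℝ) : ℂ) * ((h:ℂ))⁻¹ * σ1 y + d1 y)) y := by
    intro y hy
    rw [hw1fun]
    have : HasDerivAt (fun y => eh h y * σ1 y) _ y := (hehd y).mul (hσ1d y hy)
    convert this using 1
    ring
  have hW2 : ∀ y ∈ Set.Ioo α β, HasDerivAt (w2 h)
      (eh h y * (Complex.I * ((s y : ℝ) : ℂ) * σ2 y + (h:ℂ) * d2 y)) y := by
    intro y hy
    rw [hw2fun]
    have : HasDerivAt (fun y => (h : ℂ) * (eh h y * σ2 y)) _ y :=
      ((hehd y).mul (hσ2d y hy)).const_mul (h : ℂ)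
    convert this using 1
    field_simp
  -- second derivatives
  have hddw1 : deriv (deriv (w1 h)) x
      = eh h x * (Complex.I * ((s x : ℝ) : ℂ) * ((h:ℂ))⁻¹
          * (Complex.I * ((s x : ℝ) : ℂ) * ((h:ℂ))⁻¹ * σ1 x + d1 x)
        + (Complex.I * ((ds x : ℝ) : ℂ) * ((h:ℂ))⁻¹ * σ1 x
          + Complex.I * ((s x : ℝ) : ℂ) * ((h:ℂ))⁻¹ * d1 x + dd1 x)) := by
    have hev : deriv (w1 h) =ᶠ[nhds x]
        (fun y => eh h y * (Complex.I * ((s y : ℝ) : ℂ) * ((h:ℂ))⁻¹ * σ1 y + d1 y)) := by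
      filter_upwards [hIo.mem_nhds hxI] with y hy using (hW1 y hy).deriv
    rw [Filter.EventuallyEq.deriv_eq hev]
    have hsCd : HasDerivAt (fun y => ((s y : ℝ) : ℂ)) ((ds x : ℝ) : ℂ) x :=
      (hsd x hxI).ofReal_comp
    have hin : HasDerivAt (fun y => Complex.I * ((s y : ℝ) : ℂ) * ((h:ℂ))⁻¹ * σ1 y + d1 y)
        (Complex.I * ((ds x : ℝ) : ℂ) * ((h:ℂ))⁻¹ * σ1 x
          + Complex.I * ((s x : ℝ) : ℂ) * ((h:ℂ))⁻¹ * d1 x + dd1 x) x := by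
      have h1 : HasDerivAt (fun y => Complex.I * ((s y : ℝ) : ℂ) * ((h:ℂ))⁻¹ * σ1 y + d1 y) _ x :=
        ((((hsCd.const_mul Complex.I).mul_const ((h:ℂ))⁻¹)).mul (hσ1d x hxI)).add
        (hd1d x hxI)
      convert h1 using 1
      try ring
    have hm : HasDerivAt
      (fun y => eh h y * (Complex.I * ((s y : ℝ) : ℂ) * ((h:ℂ))⁻¹ * σ1 y + d1 y)) _ x :=
      (hehd x).mul hin
    rw [hm.deriv]
    ring
  have hddw2 : deriv (deriv (w2 h)) x
      = eh h x * (Complex.I * ((s x : ℝ) : ℂ) * ((h:ℂ))⁻¹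
          * (Complex.I * ((s x : ℝ) : ℂ) * σ2 x + (h:ℂ) * d2 x)
        + (Complex.I * ((ds x : ℝ) : ℂ) * σ2 x
          + Complex.I * ((s x : ℝ) : ℂ) * d2 x + (h:ℂ) * dd2 x)) := by
    have hev : deriv (w2 h) =ᶠ[nhds x]
        (fun y => eh h y * (Complex.I * ((s y : ℝ) : ℂ) * σ2 y + (h:ℂ) * d2 y)) := by
      filter_upwards [hIo.mem_nhds hxI] with y hy using (hW2 y hy).deriv
    rw [Filter.EventuallyEq.deriv_eq hev]
    have hsCd : HasDerivAt (fun y => ((s y : ℝ) : ℂ)) ((ds x : ℝ) : ℂ) x :=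
      (hsd x hxI).ofReal_comp
    have hin : HasDerivAt (fun y => Complex.I * ((s y : ℝ) : ℂ) * σ2 y + (h:ℂ) * d2 y)
        (Complex.I * ((ds x : ℝ) : ℂ) * σ2 x
          + Complex.I * ((s x : ℝ) : ℂ) * d2 x + (h:ℂ) * dd2 x) x := by
      have h1 : HasDerivAt (fun y => Complex.I * ((s y : ℝ) : ℂ) * σ2 y + (h:ℂ) * d2 y) _ x :=
        ((hsCd.const_mul Complex.I).mul (hσ2d x hxI)).add
        ((hd2d x hxI).const_mul (h:ℂ))
      convert h1 using 1
      try ring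
    have hm : HasDerivAt
      (fun y => eh h y * (Complex.I * ((s y : ℝ) : ℂ) * σ2 y + (h:ℂ) * d2 y)) _ x :=
      (hehd x).mul hin
    rw [hm.deriv]
    ring
  have hdw2 : deriv (w2 h) x
      = eh h x * (Complex.I * ((s x : ℝ) : ℂ) * σ2 x + (h:ℂ) * d2 x) :=
    (hW2 x hxI).deriv
  have hdprod : deriv (fun y => ((r1 y : ℝ) : ℂ) * w1 h y) x
      = ((dr1 x : ℝ) : ℂ) * (eh h x * σ1 x)
        + (r1 x : ℂ) * (eh h x * (Complex.I * ((s x : ℝ) : ℂ) * ((h:ℂ))⁻¹ * σ1 x + d1 x)) := by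
    have hr1Cd : HasDerivAt (fun y => ((r1 y : ℝ) : ℂ)) ((dr1 x : ℝ) : ℂ) x :=
      (hr1d x).ofReal_comp
    have hm : HasDerivAt (fun y => ((r1 y : ℝ) : ℂ) * w1 h y) _ x := hr1Cd.mul (hW1 x hxI)
    have := hm.deriv
    rw [this, hw1fun]
  have hw1x : w1 h x = eh h x * σ1 x := by rw [hw1fun]
  have hw2x : w2 h x = (h:ℂ) * (eh h x * σ2 x) := by rw [hw2fun]
  -- the two residual identities
  have hres1 : -(h : ℂ) ^ 2 * deriv (deriv (w1 h)) x
      + ((V1 x - E : ℝ) : ℂ) * w1 h x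
      + (h : ℂ) * ((r0 x : ℂ) * w2 h x + (h : ℂ) * (r1 x : ℂ) * deriv (w2 h) x)
      = (h:ℂ)^2 * eh h x * (A1 x + (h:ℂ) * B1 x) := by
    rw [hddw1, hw1x, hw2x, hdw2, hA1_def, hB1_def]
    have := wkb_alg1 (h:ℂ) ((h:ℂ))⁻¹ (eh h x) ((s x : ℝ) : ℂ) ((ds x : ℝ) : ℂ)
      (σ1 x) (d1 x) (dd1 x) (σ2 x) (d2 x) ((E - V1 x : ℝ) : ℂ) ((r0 x : ℂ)) ((r1 x : ℂ))
      hinv (hs2 x hxI) (htrans x hxI)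
    push_cast at this ⊢
    linear_combination this
  have hres2 : (h : ℂ) * ((r0 x : ℂ) * w1 h x
        - (h : ℂ) * deriv (fun y => ((r1 y : ℝ) : ℂ) * w1 h y) x)
      - (h : ℂ) ^ 2 * deriv (deriv (w2 h)) x
      + ((V2 x - E : ℝ) : ℂ) * w2 h x
      = (h:ℂ)^2 * eh h x * (A2 x + (h:ℂ) * B2 x) := by
    rw [hddw2, hw1x, hw2x, hdprod, hA2_def, hB2_def]
    have := wkb_alg2 (h:ℂ) ((h:ℂ))⁻¹ (eh h x) ((s x : ℝ) : ℂ) ((ds x : ℝ) : ℂ)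
      (σ1 x) (d1 x) (σ2 x) (d2 x) (dd2 x) ((E - V1 x : ℝ) : ℂ) ((V2 x - V1 x : ℝ) : ℂ)
      ((r0 x : ℂ)) ((r1 x : ℂ)) ((dr1 x : ℝ) : ℂ)
      hinv (hs2 x hxI) (hcross x hxI)
    push_cast at this ⊢
    linear_combination this
  -- final bounds
  have habsh : ‖(h:ℂ)^2‖ = h^2 := by
    rw [norm_pow, Complex.norm_real, Real.norm_of_nonneg hh0.le]
  have hbound : ∀ (A B : ℝ → ℂ) (CA CB : ℝ),
      ‖A x‖ ≤ CA → ‖B x‖ ≤ CB →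
      ‖(h:ℂ)^2 * eh h x * (A x + (h:ℂ) * B x)‖
        ≤ (max CA 0 + max CB 0) * h^2 := by
    intro A B CA CB hA hB
    rw [norm_mul, norm_mul, habsh, habs_eh, mul_one]
    have h1 : ‖A x + (h:ℂ) * B x‖
        ≤ ‖A x‖ + ‖(h:ℂ) * B x‖ := norm_add_le _ _
    have h2 : ‖(h:ℂ) * B x‖ = h * ‖B x‖ := by
      rw [norm_mul, Complex.norm_real, Real.norm_of_nonneg hh0.le]
    have h3 : h * ‖B x‖ ≤ max CB 0 := by
      calc h * ‖B x‖ ≤ 1 * max CB 0 := by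
            apply mul_le_mul hh1 (hB.trans (le_max_left _ _)) (norm_nonneg _)
            norm_num
        _ = max CB 0 := one_mul _
    have h4 : ‖A x‖ ≤ max CA 0 := hA.trans (le_max_left _ _)
    have h5 : ‖A x + (h:ℂ) * B x‖ ≤ max CA 0 + max CB 0 := by
      calc ‖A x + (h:ℂ) * B x‖
          ≤ ‖A x‖ + ‖(h:ℂ) * B x‖ := h1
        _ ≤ max CA 0 + max CB 0 := by rw [h2]; exact add_le_add h4 h3
    calc h^2 * ‖A x + (h:ℂ) * B x‖ ≤ h^2 * (max CA 0 + max CB 0) := by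
          apply mul_le_mul_of_nonneg_left h5 (by positivity)
      _ = (max CA 0 + max CB 0) * h^2 := by ring
  constructor
  · rw [hres1]
    have := hbound A1 B1 C1 C2
      (by exact hC1 x hxJ)
      (by exact hC2 x hxJ)
    refine this.trans ?_
    have hnn : 0 ≤ max C3 0 + max C4 0 + 1 := by positivity
    nlinarith [sq_nonneg h, hh0.le, pow_pos hh0 2]
  · rw [hres2]
    have := hbound A2 B2 C3 C4
      (by exact hC3 x hxJ)
      (by exact hC4 x hxJ)
    refine this.trans ?_
    have hnn : 0 ≤ max C1 0 + max C2 0 + 1 := by positivity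
    nlinarith [sq_nonneg h, hh0.le, pow_pos hh0 2]
end
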